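/- (Mover properties do not characterize sound sync-point instrumentations.) Let a, b, c be distinct actions, G the CFG with locations ℓ₀,ℓ₁,ℓ₂,ℓ₃ (initial ℓ₀, exit ℓ₃) and edges (ℓ₀,a,ℓ₁), (ℓ₁,b,ℓ₂), (ℓ₂,c,ℓ₃), and G′ the CFG with locations ℓ₀,ℓ₁,ℓ̂₁,ℓ₂,ℓ̂₂,ℓ₃ and edges (ℓ₀,a,ℓ₁), (ℓ₁,•,ℓ̂₁), (ℓ̂₁,b,ℓ₂), (ℓ₂,•,ℓ̂₂), (ℓ̂₂,c,ℓ₃). Then G′ is a sync-point instrumentation of G, and for the symmetric commutativity relations I = {a,b,c}² ∖ {(b,b),(c,c)} and I′ = {a,b,c}² ∖ {(b,c),(c,b)}: (i) G′ is sound with respect to I; (ii) G′ is unsound with respect to I′; (iii) every action in {a,b,c} has the same left-mover and right-mover status with respect to I and with respect to I′. -/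

import Mathlib

/-!
Common definitions: control flow graphs, traces, interleavings of parameterized
programs, the covering preorder, Mazurkiewicz reductions, atomic fusions,
sync-point instrumentations, locks and general synchronization alphabets.
-/

/-- `PathRel E ℓ w ℓ'` : the word `w` labels a path from `ℓ` to `ℓ'` in the
labeled graph with edge relation `E`. -/
inductive PathRel {L α : Type} (E : L → α → L → Prop) : L → List α → L → Prop
  | nil (ℓ : L) : PathRel E ℓ [] ℓ
  | cons {ℓ ℓ' ℓ'' : L} {a : α} {w : List α} :
      E ℓ a ℓ' → PathRel E ℓ' w ℓ'' → PathRel E ℓ (a :: w) ℓ''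

/-- A control flow graph over the alphabet `α`. -/
structure CFG (α : Type) where
  Loc : Type
  loc_finite : Finite Loc
  Edge : Loc → α → Loc → Prop
  init : Loc
  exit : Loc
  init_ne_exit : init ≠ exit

namespace CFG

variable {α : Type}

/-- The set of words labeling paths from the initial to the exit location. -/
def traces (G : CFG α) : Set (List α) := { w | PathRel G.Edge G.init w G.exit }

/-- The set of actions occurring in `G`. -/
def alphabet (G : CFG α) : Set α := { a | ∃ ℓ ℓ', G.Edge ℓ a ℓ' }

/-- Action `a` labels at most one edge of `G`. -/
def UniqueAct (G : CFG α) (a : α) : Prop :=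
  ∀ ⦃ℓ₁ ℓ₁' ℓ₂ ℓ₂' : G.Loc⦄, G.Edge ℓ₁ a ℓ₁' → G.Edge ℓ₂ a ℓ₂' → ℓ₁ = ℓ₂ ∧ ℓ₁' = ℓ₂'

/-- The transition relation is finite. -/
def EdgeFinite (G : CFG α) : Prop :=
  { p : G.Loc × α × G.Loc | G.Edge p.1 p.2.1 p.2.2 }.Finite

/-- Every location is reachable from the initial location, and the exit
location is reachable from every location. -/
def Reachable (G : CFG α) : Prop :=
  ∀ ℓ : G.Loc, (∃ w, PathRel G.Edge G.init w ℓ) ∧ (∃ w, PathRel G.Edge ℓ w G.exit)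

/-- Well-formedness of a CFG over a plain alphabet (finitely many transitions,
reachability conditions, and every action labels at most one edge). -/
def WF (G : CFG α) : Prop := G.EdgeFinite ∧ G.Reachable ∧ ∀ a : α, G.UniqueAct a

end CFG

/-! ### Interleavings -/

/-- `τ↑i` : the projection of an interleaving to the actions of thread `i`. -/
def projThread {α : Type} (i : ℕ) (τ : List (α × ℕ)) : List α :=
  (τ.filter (fun x => x.2 == i)).map Prod.fst

/-- The interleavings of the parameterized program with thread template `G`
and no synchronization. -/
def progLang {α : Type} (G : CFG α) : Set (List (α × ℕ)) :=
  { τ | ∀ i : ℕ, projThread i τ ∈ G.traces ∨ projThread i τ = [] }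

/-- One swap of two adjacent commuting indexed actions of different threads. -/
def SwapStep {α : Type} (I : Set (α × α)) (τ τ' : List (α × ℕ)) : Prop :=
  ∃ (ρ σ : List (α × ℕ)) (a b : α) (i j : ℕ),
    (a, b) ∈ I ∧ i ≠ j ∧
      τ = ρ ++ (a, i) :: (b, j) :: σ ∧ τ' = ρ ++ (b, j) :: (a, i) :: σ

/-- The covering preorder `⊑_I`: the smallest reflexive-transitive relation
allowing swaps of adjacent `I`-commuting actions of different threads. -/
def CoveredBy {α : Type} (I : Set (α × α)) : List (α × ℕ) → List (α × ℕ) → Prop :=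
  Relation.ReflTransGen (SwapStep I)

/-- `L₁` is a Mazurkiewicz reduction (up to `I`) of `L₂`. -/
def MazReduction {α : Type} (I : Set (α × α)) (L₁ L₂ : Set (List (α × ℕ))) : Prop :=
  L₁ ⊆ L₂ ∧ ∀ τ ∈ L₂, ∃ τ' ∈ L₁, CoveredBy I τ τ'

/-! ### Morphisms -/

/-- Image of a word under a morphism `μ : α → 𝒫(β^*)`. -/
def morphWord {α β : Type} (μ : α → Set (List β)) : List α → Set (List β)
  | [] => {[]}
  | x :: w => { s | ∃ u ∈ μ x, ∃ v ∈ morphWord μ w, s = u ++ v }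

/-- Image of a language under a morphism. -/
def morphLang {α β : Type} (μ : α → Set (List β)) (L : Set (List α)) : Set (List β) :=
  ⋃ w ∈ L, morphWord μ w

/-! ### Atomic fusions -/

/-- Locations of the graph obtained from `G'` by substituting `Gβ k` for the
edge labeled `β k`: locations of `G'` together with the interior locations of
each `Gβ k`. -/
def fuseLoc {α : Type} (G' : CFG α) {n : ℕ} (Gβ : Fin n → CFG α) : Type :=
  G'.Loc ⊕ Σ k : Fin n, { ℓ : (Gβ k).Loc // ℓ ≠ (Gβ k).init ∧ ℓ ≠ (Gβ k).exit }

open Classical in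
/-- Embedding of the locations of `Gβ k` into the substituted graph, identifying
the initial and exit locations of `Gβ k` with the endpoints of the `β k` edge. -/
noncomputable def fuseEmb {α : Type} (G' : CFG α) {n : ℕ} (Gβ : Fin n → CFG α)
    (src tgt : Fin n → G'.Loc) (k : Fin n) (ℓ : (Gβ k).Loc) : fuseLoc G' Gβ :=
  if h1 : ℓ = (Gβ k).init then Sum.inl (src k)
  else if h2 : ℓ = (Gβ k).exit then Sum.inl (tgt k)
  else Sum.inr ⟨k, ℓ, h1, h2⟩

/-- Edges of the graph obtained from `G'` by substituting each `Gβ k` for the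
edge labeled `β k` (with endpoints `src k`, `tgt k`). -/
def fuseEdge {α : Type} (G' : CFG α) {n : ℕ} (β : Fin n → α) (Gβ : Fin n → CFG α)
    (src tgt : Fin n → G'.Loc) (x : fuseLoc G' Gβ) (a : α) (y : fuseLoc G' Gβ) : Prop :=
  (∃ ℓ ℓ', G'.Edge ℓ a ℓ' ∧ (∀ k, a ≠ β k) ∧ x = Sum.inl ℓ ∧ y = Sum.inl ℓ') ∨
  (∃ k ℓ ℓ', (Gβ k).Edge ℓ a ℓ' ∧
      x = fuseEmb G' Gβ src tgt k ℓ ∧ y = fuseEmb G' Gβ src tgt k ℓ')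

/-- An atomic fusion `F = (G', (β 0, Gβ 0), …, (β (n-1), Gβ (n-1)))` of the CFG `G`:
`G` is (up to isomorphism) obtained from `G'` by replacing, for each `k`, the unique
edge labeled `β k` by the graph `Gβ k`. -/
structure AtomicFusion {α : Type} (G : CFG α) (n : ℕ) where
  G' : CFG α
  β : Fin n → α
  Gβ : Fin n → CFG α
  β_inj : Function.Injective β
  src : Fin n → G'.Loc
  tgt : Fin n → G'.Loc
  β_edge : ∀ k, G'.Edge (src k) (β k) (tgt k)
  Gβ_alph : ∀ k a, a ∈ (Gβ k).alphabet → ∀ k', a ≠ β k'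
  Gβ_nonempty : ∀ k, ((Gβ k).traces).Nonempty
  iso : G.Loc ≃ fuseLoc G' Gβ
  iso_init : iso G.init = Sum.inl G'.init
  iso_exit : iso G.exit = Sum.inl G'.exit
  iso_edge : ∀ ℓ a ℓ', G.Edge ℓ a ℓ' ↔ fuseEdge G' β Gβ src tgt (iso ℓ) a (iso ℓ')

namespace AtomicFusion

variable {α : Type} {G : CFG α} {n : ℕ}

/-- The fusion morphism `μ_F`: maps each block symbol `β k` to `traces (Gβ k)`
and any other action `a` to `{[a]}`. -/
def morph (F : AtomicFusion G n) (a : α) : Set (List α) :=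
  { w | (∃ k, a = F.β k ∧ w ∈ (F.Gβ k).traces) ∨ ((∀ k, a ≠ F.β k) ∧ w = [a]) }

/-- The lift `μ̂_F` of the fusion morphism to indexed actions. -/
def morphIdx (F : AtomicFusion G n) (x : α × ℕ) : Set (List (α × ℕ)) :=
  { w | ∃ u ∈ F.morph x.1, w = u.map (fun a => (a, x.2)) }

/-- Soundness of an atomic fusion wrt. the commutativity relation `I`:
`μ̂_F(L(G'))` is a Mazurkiewicz reduction (up to `I`) of `L(G)`. -/
def Sound (F : AtomicFusion G n) (I : Set (α × α)) : Prop :=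
  MazReduction I (morphLang F.morphIdx (progLang F.G')) (progLang G)

end AtomicFusion

/-! ### Movers -/

/-- `a` is a left-mover if `(b, a) ∈ I` for all `b ∈ Σ(G)`. -/
def LeftMover {α : Type} (G : CFG α) (I : Set (α × α)) (a : α) : Prop :=
  ∀ b ∈ G.alphabet, (b, a) ∈ I

/-- `a` is a right-mover if `(a, b) ∈ I` for all `b ∈ Σ(G)`. -/
def RightMover {α : Type} (G : CFG α) (I : Set (α × α)) (a : α) : Prop :=
  ∀ b ∈ G.alphabet, (a, b) ∈ I

/-! ### Sync-points -/

/-- The word `⟨•:t₁⟩ … ⟨•:t_n⟩` where `T = {t₁ < … < t_n}`; the sync-point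
symbol `•` is represented by `none`. -/
def bulletWord {α : Type} (T : Finset ℕ) : List (Option α × ℕ) :=
  (T.sort (· ≤ ·)).map (fun t => ((none : Option α), t))

/-- A concatenation of words, each of which either consists of program actions
of threads in `T` only, or equals `⟨•:T⟩`. -/
inductive PhaseWord {α : Type} (T : Finset ℕ) : List (Option α × ℕ) → Prop
  | nil : PhaseWord T []
  | act {w τ : List (Option α × ℕ)} :
      (∀ x ∈ w, (∃ a : α, x.1 = some a) ∧ x.2 ∈ T) → PhaseWord T τ → PhaseWord T (w ++ τ)
  | bullet {τ : List (Option α × ℕ)} : PhaseWord T τ → PhaseWord T (bulletWord T ++ τ)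

/-- `sync_{•,T}`: while the threads in `T` are running they pass sync-points
together; at some point a subset `T' ⊊ T` of threads remains. -/
inductive SyncT {α : Type} : Finset ℕ → List (Option α × ℕ) → Prop
  | base : SyncT ∅ []
  | step {T T' : Finset ℕ} {τ₁ τ₂ : List (Option α × ℕ)} :
      T' ⊂ T → PhaseWord T τ₁ → SyncT T' τ₂ → SyncT T (τ₁ ++ τ₂)

/-- `sync_•(τ̂)` : there is a finite set `T ⊆ ℕ` with `sync_{•,T}(τ̂)`. -/
def SyncBullet {α : Type} (τ : List (Option α × ℕ)) : Prop := ∃ T : Finset ℕ, SyncT T τ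

/-- Restriction of an indexed word over `Σ ∪ {•}` to its `Σ`-indexed letters. -/
def restrictSigma {α : Type} (τ : List (Option α × ℕ)) : List (α × ℕ) :=
  τ.filterMap (fun x => x.1.map (fun a => (a, x.2)))

/-- `G'` is a sync-point instrumentation of `G`: erasing `•` from the traces of
`G'` yields exactly the traces of `G`, injectively. -/
structure SyncInstr {α : Type} (G : CFG α) (G' : CFG (Option α)) : Prop where
  proj_traces : G.traces = (fun τ => τ.filterMap id) '' G'.traces
  proj_inj : ∀ τ₁ ∈ G'.traces, ∀ τ₂ ∈ G'.traces, τ₁.filterMap id = τ₂.filterMap id → τ₁ = τ₂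

/-- Well-formedness of a CFG over `Σ ∪ {•}` (every action of `Σ` labels at most
one edge; `•` may label several edges). -/
def CFG.WFsync {α : Type} (G' : CFG (Option α)) : Prop :=
  G'.EdgeFinite ∧ G'.Reachable ∧ ∀ a : α, G'.UniqueAct (some a)

/-- The language `L(G, G')` of the sync-point instrumented program. -/
def instrLang {α : Type} (G' : CFG (Option α)) : Set (List (α × ℕ)) :=
  { τ | ∃ τ' : List (Option α × ℕ), τ = restrictSigma τ' ∧ SyncBullet τ' ∧
      ∀ i : ℕ, projThread i τ' ∈ G'.traces ∨ projThread i τ' = [] }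

/-- `|w|_•` : the number of occurrences of the sync-point symbol in `w`. -/
def bulletCount {α : Type} (w : List (Option α)) : ℕ := (w.filter (fun x => x.isNone)).length

/-- The phase order `⤳`: `a` can occur in a strictly later phase than `b` in
some execution of the instrumented program. -/
def PhaseOrder {α : Type} (G' : CFG (Option α)) (a b : α) : Prop :=
  ∃ τ' : List (Option α × ℕ), SyncBullet τ' ∧ restrictSigma τ' ∈ instrLang G' ∧
    ∃ i j : ℕ, i ≠ j ∧
      ∃ τ₁ σ₁, projThread i τ' = τ₁ ++ some a :: σ₁ ∧
      ∃ τ₂ σ₂, projThread j τ' = τ₂ ++ some b :: σ₂ ∧ bulletCount τ₁ < bulletCount τ₂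

/-! ### General synchronization alphabets -/

/-- A synchronization alphabet: a set `σs` of synchronization actions together
with a predicate `Φ` on indexed words over `Σ ∪ S`, preserved by all
permutations of thread indices. -/
structure SyncAlphabet (α σs : Type) where
  Φ : List ((α ⊕ σs) × ℕ) → Prop
  perm_inv : ∀ (π : Equiv.Perm ℕ) (τ : List ((α ⊕ σs) × ℕ)),
      Φ τ → Φ (τ.map (fun x => (x.1, π x.2)))

/-- Restriction of an indexed word over `Σ ∪ S` to its `Σ`-indexed letters. -/
def restrictActions {α σs : Type} (τ' : List ((α ⊕ σs) × ℕ)) : List (α × ℕ) :=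
  τ'.filterMap (fun x => (x.1.getLeft?).map (fun a => (a, x.2)))

/-- The language of the parameterized program `P = ((S, Φ), G)`. -/
def syncLang {α σs : Type} (SA : SyncAlphabet α σs) (G : CFG (α ⊕ σs)) :
    Set (List (α × ℕ)) :=
  { τ | ∃ τ', τ = restrictActions τ' ∧ SA.Φ τ' ∧
      ∀ i : ℕ, projThread i τ' ∈ G.traces ∨ projThread i τ' = [] }

/-- The configuration `C` is coverable in `P = ((S, Φ), G)`. -/
def Coverable {α σs : Type} (SA : SyncAlphabet α σs) (G : CFG (α ⊕ σs))
    {r : ℕ} (C : Fin r → G.Loc) : Prop :=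
  ∃ (τ' : List ((α ⊕ σs) × ℕ)) (t : Fin r → ℕ), SA.Φ τ' ∧ Function.Injective t ∧
    ∀ k, PathRel G.Edge G.init (projThread (t k) τ') (C k)

/-- Well-formedness of a CFG over `Σ ∪ S` (only actions of `Σ` are required to
label at most one edge). -/
def CFG.WFsum {α σs : Type} (G : CFG (α ⊕ σs)) : Prop :=
  G.EdgeFinite ∧ G.Reachable ∧ ∀ a : α, G.UniqueAct (Sum.inl a)

/-! ### Locks -/

/-- The valid projections of a lock-respecting execution to a single lock `m`:
a sequence of blocks `⟨acq(m) rel(m) : i⟩`, optionally followed by a single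
`⟨acq(m) : i⟩`.  `true` stands for `acq(m)`, `false` for `rel(m)`. -/
inductive LockSeq : List (Bool × ℕ) → Prop
  | nil : LockSeq []
  | final (i : ℕ) : LockSeq [(true, i)]
  | block (i : ℕ) {w : List (Bool × ℕ)} : LockSeq w → LockSeq ((true, i) :: (false, i) :: w)

/-- Projection of an indexed word over `Σ ∪ S_lk` to the indexed occurrences of
`acq(m)`/`rel(m)` for the lock `m`. -/
def lockProj {α M : Type} [DecidableEq M] (m : M) (τ' : List ((α ⊕ (M × Bool)) × ℕ)) :
    List (Bool × ℕ) :=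
  τ'.filterMap (fun x => match x.1 with
    | Sum.inl _ => none
    | Sum.inr p => if p.1 = m then some (p.2, x.2) else none)

/-- The lock synchronization predicate `sync_lk`. -/
def SyncLk {α M : Type} [DecidableEq M] (τ' : List ((α ⊕ (M × Bool)) × ℕ)) : Prop :=
  ∀ m : M, LockSeq (lockProj m τ')

/-- The language of a program `P = ((S_lk, sync_lk), G)` with locks. -/
def lockLang {α M : Type} [DecidableEq M] (G : CFG (α ⊕ (M × Bool))) :
    Set (List (α × ℕ)) :=
  { τ | ∃ τ', τ = restrictActions τ' ∧ SyncLk τ' ∧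
      ∀ i : ℕ, projThread i τ' ∈ G.traces ∨ projThread i τ' = [] }

/-- Coverability of a configuration in a program with locks. -/
def CoverableLk {α M : Type} [DecidableEq M] (G : CFG (α ⊕ (M × Bool)))
    {r : ℕ} (C : Fin r → G.Loc) : Prop :=
  ∃ (τ' : List ((α ⊕ (M × Bool)) × ℕ)) (t : Fin r → ℕ), SyncLk τ' ∧ Function.Injective t ∧
    ∀ k, PathRel G.Edge G.init (projThread (t k) τ') (C k)

/-! ### Locks and sync-points combined -/

/-- Restriction of an indexed word over `Σ ∪ S_lk ∪ {•}` to `(Σ ∪ S_lk)`-indexed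
letters. -/
def restrictSyncWord {α M : Type} (τ' : List (Option (α ⊕ (M × Bool)) × ℕ)) :
    List ((α ⊕ (M × Bool)) × ℕ) :=
  τ'.filterMap (fun x => x.1.map (fun e => (e, x.2)))

/-- Restriction of an indexed word over `Σ ∪ S_lk ∪ {•}` to `(Σ ∪ {•})`-indexed
letters. -/
def restrictBulletWord {α M : Type} (τ' : List (Option (α ⊕ (M × Bool)) × ℕ)) :
    List (Option α × ℕ) :=
  τ'.filterMap (fun x => match x.1 with
    | none => some ((none : Option α), x.2)
    | some (Sum.inl a) => some (some a, x.2)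
    | some (Sum.inr _) => none)

/-- Restriction of an indexed word over `Σ ∪ S_lk ∪ {•}` to `Σ`-indexed letters. -/
def restrictActionsO {α M : Type} (τ' : List (Option (α ⊕ (M × Bool)) × ℕ)) :
    List (α × ℕ) :=
  τ'.filterMap (fun x => match x.1 with
    | some (Sum.inl a) => some (a, x.2)
    | _ => none)

/-- The language `L(P̂, G')` of a lock program instrumented with sync-points. -/
def instrLockLang {α M : Type} [DecidableEq M] (G' : CFG (Option (α ⊕ (M × Bool)))) :
    Set (List (α × ℕ)) :=
  { τ | ∃ τ', τ = restrictActionsO τ' ∧ SyncLk (restrictSyncWord τ') ∧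
      SyncBullet (restrictBulletWord τ') ∧
      ∀ i : ℕ, projThread i τ' ∈ G'.traces ∨ projThread i τ' = [] }

/-- The thread template `G` with locations `ℓ₀,…,ℓ₃` (initial `ℓ₀`, exit `ℓ₃`) and edges
`(ℓ₀,a,ℓ₁)`, `(ℓ₁,b,ℓ₂)`, `(ℓ₂,c,ℓ₃)`. -/
def exG14 {α : Type} (a b c : α) : CFG α where
  Loc := Fin 4
  loc_finite := inferInstance
  Edge := fun ℓ x ℓ' =>
    (ℓ = 0 ∧ x = a ∧ ℓ' = 1) ∨ (ℓ = 1 ∧ x = b ∧ ℓ' = 2) ∨ (ℓ = 2 ∧ x = c ∧ ℓ' = 3)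
  init := 0
  exit := 3
  init_ne_exit := by decide

/-- The instrumented template `G'` with locations `ℓ₀,ℓ₁,ℓ̂₁,ℓ₂,ℓ̂₂,ℓ₃` (as `0,…,5`) and
edges `(ℓ₀,a,ℓ₁)`, `(ℓ₁,•,ℓ̂₁)`, `(ℓ̂₁,b,ℓ₂)`, `(ℓ₂,•,ℓ̂₂)`, `(ℓ̂₂,c,ℓ₃)`. -/
def exG14' {α : Type} (a b c : α) : CFG (Option α) where
  Loc := Fin 6
  loc_finite := inferInstance
  Edge := fun ℓ x ℓ' =>
    (ℓ = 0 ∧ x = some a ∧ ℓ' = 1) ∨ (ℓ = 1 ∧ x = none ∧ ℓ' = 2) ∨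
    (ℓ = 2 ∧ x = some b ∧ ℓ' = 3) ∨ (ℓ = 3 ∧ x = none ∧ ℓ' = 4) ∨
    (ℓ = 4 ∧ x = some c ∧ ℓ' = 5)
  init := 0
  exit := 5
  init_ne_exit := by decide

/-!
Both thread templates are chains, so every thread runs `a b c`, respectively `a • b • c`.
For `I`, a `b` or `c` commutes with every `a`, and a `c` with every `b`, of the other threads;
so any interleaving can be rearranged into all `a`s, then all `b`s, then all `c`s, and separating
these three blocks by sync points gives an execution of the instrumented program. For `I'`, an
occurrence of `c` in one thread and of `b` in another never swap, so their relative order is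
invariant under `⊑_{I'}`. But in the instrumented program, whenever a thread performs an action,
every thread still running has passed as many sync points as it has; a thread performs `c` only
after two sync points, so no `b` can follow it. The mover statuses agree because `a` is a
both-mover and neither `b` nor `c` is a left- or right-mover for either relation.
-/

theorem PathRel.eq_of_deterministic {L α : Type} {E : L → α → L → Prop}
    (hdet : ∀ ⦃ℓ x ℓ' y ℓ''⦄, E ℓ x ℓ' → E ℓ y ℓ'' → x = y ∧ ℓ' = ℓ'')
    {e : L} (he : ∀ x ℓ, ¬ E e x ℓ) {ℓ : L} {w w' : List α}
    (h : PathRel E ℓ w e) (h' : PathRel E ℓ w' e) : w = w' := by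
  induction h generalizing w' with
  | nil => cases h' with
    | nil => rfl
    | cons hedge _ => exact absurd hedge (he _ _)
  | cons hedge _ ih => cases h' with
    | nil => exact absurd hedge (he _ _)
    | cons hedge' hpath' =>
      obtain ⟨rfl, rfl⟩ := hdet hedge hedge'
      rw [ih he hpath']

section Interleavings

variable {α : Type}

@[simp] theorem projThread_nil (i : ℕ) : projThread i ([] : List (α × ℕ)) = [] := rfl

theorem projThread_cons (i : ℕ) (x : α × ℕ) (τ : List (α × ℕ)) :
    projThread i (x :: τ) = if x.2 = i then x.1 :: projThread i τ else projThread i τ := by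
  by_cases h : x.2 = i <;> simp [projThread, h]

theorem projThread_append (i : ℕ) (τ σ : List (α × ℕ)) :
    projThread i (τ ++ σ) = projThread i τ ++ projThread i σ := by
  simp [projThread, List.filter_append]

theorem projThread_eq_nil_iff {i : ℕ} {τ : List (α × ℕ)} :
    projThread i τ = [] ↔ ∀ x ∈ τ, x.2 ≠ i := by
  simp [projThread, List.filter_eq_nil_iff]

theorem mem_projThread {x : α × ℕ} {τ : List (α × ℕ)} (h : x ∈ τ) : x.1 ∈ projThread x.2 τ :=
  List.mem_map_of_mem (List.mem_filter.2 ⟨h, by simp⟩)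

theorem projThread_filter (p : α → Bool) (i : ℕ) (τ : List (α × ℕ)) :
    projThread i (τ.filter (fun x => p x.1)) = (projThread i τ).filter p := by
  simp only [projThread, List.filter_filter, List.filter_map]
  congr 2
  ext x
  exact Bool.and_comm _ _

theorem projThread_map_fst {β : Type} (f : α → β) (i : ℕ) (τ : List (α × ℕ)) :
    projThread i (τ.map (Prod.map f id)) = (projThread i τ).map f := by
  simp [projThread, List.filter_map, Function.comp_def]

theorem pairwise_of_projThread {R : α → α → Prop} {τ : List (α × ℕ)}
    (h : ∀ i, (projThread i τ).Pairwise R) : τ.Pairwise (fun x y => x.2 = y.2 → R x.1 y.1) := by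
  induction τ with
  | nil => exact List.Pairwise.nil
  | cons x τ ih =>
    refine List.pairwise_cons.2 ⟨fun y hy hxy => ?_, ih fun i => ?_⟩
    · have hx := h x.2
      rw [projThread_cons, if_pos rfl] at hx
      exact List.rel_of_pairwise_cons hx (hxy ▸ mem_projThread hy)
    · have hi := h i
      rw [projThread_cons] at hi
      split_ifs at hi
      exacts [hi.of_cons, hi]

end Interleavings

section Covering

variable {α : Type} {I : Set (α × α)}

theorem SwapStep.append_left {τ τ' : List (α × ℕ)} (h : SwapStep I τ τ') (ρ : List (α × ℕ)) :
    SwapStep I (ρ ++ τ) (ρ ++ τ') := by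
  obtain ⟨ρ', σ, a, b, i, j, hab, hij, rfl, rfl⟩ := h
  exact ⟨ρ ++ ρ', σ, a, b, i, j, hab, hij, by simp, by simp⟩

theorem CoveredBy.append_left {τ τ' : List (α × ℕ)} (h : CoveredBy I τ τ') (ρ : List (α × ℕ)) :
    CoveredBy I (ρ ++ τ) (ρ ++ τ') :=
  Relation.ReflTransGen.lift (ρ ++ ·) (fun _ _ hs => SwapStep.append_left hs ρ) _ _ h

theorem CoveredBy.cons {τ τ' : List (α × ℕ)} (h : CoveredBy I τ τ') (x : α × ℕ) :
    CoveredBy I (x :: τ) (x :: τ') :=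
  h.append_left [x]

theorem coveredBy_cons_append {x : α × ℕ} {u : List (α × ℕ)} (v : List (α × ℕ))
    (h : ∀ y ∈ u, (x.1, y.1) ∈ I ∧ x.2 ≠ y.2) : CoveredBy I (x :: (u ++ v)) (u ++ x :: v) := by
  induction u with
  | nil => exact Relation.ReflTransGen.refl
  | cons y u ih =>
    obtain ⟨hxy, hthread⟩ := h y List.mem_cons_self
    exact Relation.ReflTransGen.head ⟨[], u ++ v, x.1, y.1, x.2, y.2, hxy, hthread, rfl, rfl⟩
      ((ih fun z hz => h z (List.mem_cons_of_mem y hz)).cons y)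

theorem coveredBy_filter_append (p : α × ℕ → Bool) {τ : List (α × ℕ)}
    (h : τ.Pairwise (fun x y => p y → ¬ p x → (x.1, y.1) ∈ I ∧ x.2 ≠ y.2)) :
    CoveredBy I τ (τ.filter p ++ τ.filter (fun x => !p x)) := by
  induction τ with
  | nil => exact Relation.ReflTransGen.refl
  | cons x τ ih =>
    obtain ⟨hx, hτ⟩ := List.pairwise_cons.1 h
    by_cases hpx : p x
    · simpa [List.filter_cons, hpx] using (ih hτ).cons x
    · simp only [List.filter_cons, hpx, Bool.not_false, if_true]
      refine ((ih hτ).cons x).trans (coveredBy_cons_append _ fun y hy => ?_)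
      exact hx y (List.mem_of_mem_filter hy) (List.mem_filter.1 hy).2 (by simpa using hpx)

/-- Two letters that do not commute are never swapped, so the subword they form is invariant. -/
theorem CoveredBy.filter_eq (q : α × ℕ → Bool)
    (hq : ∀ x y i j, (x, y) ∈ I → i ≠ j → ¬ (q (x, i) ∧ q (y, j)))
    {τ τ' : List (α × ℕ)} (h : CoveredBy I τ τ') : τ'.filter q = τ.filter q := by
  induction h with
  | refl => rfl
  | tail _ hs ih =>
    obtain ⟨ρ, σ, x, y, i, j, hxy, hij, rfl, rfl⟩ := hs
    rw [← ih]
    have := hq x y i j hxy hij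
    cases hx : q (x, i) <;> cases hy : q (y, j) <;> simp_all [List.filter_append]

end Covering

section SyncPoints

variable {α : Type}

theorem bulletCount_append (u v : List (Option α)) :
    bulletCount (u ++ v) = bulletCount u + bulletCount v := by
  simp [bulletCount, List.filter_append]

theorem bulletCount_projThread_eq_zero {ρ : List (Option α × ℕ)}
    (h : ∀ x ∈ ρ, ∃ a : α, x.1 = some a) (k : ℕ) : bulletCount (projThread k ρ) = 0 := by
  simp only [bulletCount, projThread, List.length_eq_zero_iff, List.filter_eq_nil_iff,
    List.mem_map, List.mem_filter]
  rintro _ ⟨x, ⟨hx, -⟩, rfl⟩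
  obtain ⟨a, ha⟩ := h x hx
  simp [ha]

theorem projThread_bulletWord (T : Finset ℕ) (k : ℕ) :
    projThread k (bulletWord (α := α) T) = if k ∈ T then [none] else [] := by
  have hfilter : (T.sort (· ≤ ·)).filter (· == k) = if k ∈ T then [k] else [] := by
    rw [List.filter_beq]
    split_ifs with hk
    · rw [List.count_eq_one_of_mem (T.sort_nodup _) ((T.mem_sort _).2 hk), List.replicate_one]
    · rw [List.count_eq_zero_of_not_mem (mt (T.mem_sort _).1 hk), List.replicate_zero]
  simp only [projThread, bulletWord, List.filter_map, List.map_map]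
  rw [show ((fun x : Option α × ℕ => x.2 == k) ∘ fun t => (none, t)) = (· == k) from rfl, hfilter]
  split_ifs <;> rfl

theorem bulletCount_projThread_bulletWord {T : Finset ℕ} {k : ℕ} (hk : k ∈ T) :
    bulletCount (projThread k (bulletWord (α := α) T)) = 1 := by
  simp [projThread_bulletWord, hk, bulletCount]

theorem restrictSigma_append (τ σ : List (Option α × ℕ)) :
    restrictSigma (τ ++ σ) = restrictSigma τ ++ restrictSigma σ :=
  List.filterMap_append

theorem restrictSigma_map_some (τ : List (α × ℕ)) :
    restrictSigma (τ.map (Prod.map some id)) = τ := by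
  simp [restrictSigma, List.filterMap_map]

theorem restrictSigma_bulletWord (T : Finset ℕ) : restrictSigma (bulletWord (α := α) T) = [] := by
  simp [restrictSigma, bulletWord, List.filterMap_map]

theorem projThread_restrictSigma (i : ℕ) (τ : List (Option α × ℕ)) :
    projThread i (restrictSigma τ) = (projThread i τ).filterMap id := by
  induction τ with
  | nil => rfl
  | cons x τ ih =>
    obtain ⟨_ | a, j⟩ := x <;> by_cases h : j = i <;>
      simp_all [restrictSigma, projThread_cons]

theorem mem_restrictSigma {x : α × ℕ} {τ : List (Option α × ℕ)} :
    x ∈ restrictSigma τ ↔ (some x.1, x.2) ∈ τ := by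
  obtain ⟨y, j⟩ := x
  simp [restrictSigma, List.mem_filterMap]

theorem exists_eq_append_cons_of_restrictSigma {τ : List (Option α × ℕ)} {u v : List (α × ℕ)}
    {x : α} {i : ℕ} (h : restrictSigma τ = u ++ (x, i) :: v) :
    ∃ ρ σ, τ = ρ ++ (some x, i) :: σ ∧ restrictSigma σ = v := by
  obtain ⟨l₁, l₂, rfl, -, h₂⟩ := List.filterMap_eq_append_iff.1 h
  obtain ⟨l₂₁, ⟨_ | y, j⟩, l₂₂, rfl, -, hy, rfl⟩ := List.filterMap_eq_cons_iff.1 h₂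
  · simp at hy
  · obtain ⟨rfl, rfl⟩ : y = x ∧ j = i := by simpa using hy
    exact ⟨l₁ ++ l₂₁, l₂₂, by simp, rfl⟩

theorem PhaseWord.snd_mem {T : Finset ℕ} {w : List (Option α × ℕ)} (h : PhaseWord T w) :
    ∀ x ∈ w, x.2 ∈ T := by
  induction h with
  | nil => simp
  | act hw _ ih => exact fun x hx => (List.mem_append.1 hx).elim (fun h => (hw x h).2) (ih x)
  | bullet _ ih =>
    refine fun x hx => (List.mem_append.1 hx).elim (fun h => ?_) (ih x)
    obtain ⟨t, ht, rfl⟩ := List.mem_map.1 h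
    exact (T.mem_sort _).1 ht

theorem SyncT.snd_mem {T : Finset ℕ} {τ : List (Option α × ℕ)} (h : SyncT T τ) :
    ∀ x ∈ τ, x.2 ∈ T := by
  induction h with
  | base => simp
  | step hsub hph _ ih =>
    exact fun x hx => (List.mem_append.1 hx).elim (hph.snd_mem x) (fun h => hsub.subset (ih x h))

/-- Outside the sync-point blocks `⟨•:T⟩`, all threads of `T` have passed equally many
sync points. -/
theorem PhaseWord.bulletCount_projThread_eq {T : Finset ℕ} {w : List (Option α × ℕ)}
    (h : PhaseWord T w) {ρ σ : List (Option α × ℕ)} (hw : w = ρ ++ σ)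
    (hσ : ∀ z ∈ σ.head?, z.1 ≠ none) {k k' : ℕ} (hk : k ∈ T) (hk' : k' ∈ T) :
    bulletCount (projThread k ρ) = bulletCount (projThread k' ρ) := by
  induction h generalizing ρ σ with
  | nil => obtain ⟨rfl, -⟩ := List.append_eq_nil_iff.1 hw.symm; rfl
  | act hu _ ih =>
    rcases List.append_eq_append_iff.1 hw with ⟨ρ', rfl, hτ⟩ | ⟨σ', rfl, -⟩
    · have hzero := bulletCount_projThread_eq_zero fun x hx => (hu x hx).1
      simp only [projThread_append, bulletCount_append, hzero, ih hτ hσ]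
    · have hzero :=
        bulletCount_projThread_eq_zero fun x hx => (hu x (List.mem_append_left σ' hx)).1
      rw [hzero, hzero]
  | bullet _ ih =>
    rcases List.append_eq_append_iff.1 hw with ⟨ρ', rfl, hτ⟩ | ⟨_ | ⟨z, σ'⟩, hρ, rfl⟩
    · simp only [projThread_append, bulletCount_append, bulletCount_projThread_bulletWord hk,
        bulletCount_projThread_bulletWord hk', ih hτ hσ]
    · rw [List.append_nil] at hρ
      rw [← hρ, bulletCount_projThread_bulletWord hk, bulletCount_projThread_bulletWord hk']
    · have hz : z ∈ bulletWord (α := α) T := hρ ▸ List.mem_append_right ρ List.mem_cons_self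
      obtain ⟨t, -, rfl⟩ := List.mem_map.1 hz
      exact absurd rfl (hσ _ rfl)

theorem SyncT.bulletCount_projThread_eq {T : Finset ℕ} {τ : List (Option α × ℕ)}
    (h : SyncT T τ) {ρ σ : List (Option α × ℕ)} {x : α} {i : ℕ}
    (hτ : τ = ρ ++ (some x, i) :: σ) {z : Option α × ℕ} (hz : z ∈ σ) :
    bulletCount (projThread i ρ) = bulletCount (projThread z.2 ρ) := by
  induction h generalizing ρ σ with
  | base => simp at hτ
  | @step T T' τ₁ τ₂ hsub hph hsync ih =>
    have hmem := (SyncT.step hsub hph hsync).snd_mem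
    rw [hτ] at hmem
    rcases List.append_eq_append_iff.1 hτ with ⟨ρ', rfl, hτ₂⟩ | ⟨σ', rfl, hσ'⟩
    · have hi : i ∈ T' := hsync.snd_mem (some x, i) (by simp [hτ₂])
      have hj : z.2 ∈ T' := hsync.snd_mem z (by simp [hτ₂, hz])
      simp only [projThread_append, bulletCount_append, ih hτ₂ hz,
        hph.bulletCount_projThread_eq (List.append_nil τ₁).symm (by simp)
          (hsub.subset hi) (hsub.subset hj)]
    · refine hph.bulletCount_projThread_eq rfl ?_ (hmem (some x, i) (by simp))
        (hmem z (by simp [hz]))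
      rcases σ' with _ | ⟨y, σ'⟩
      · simp
      · obtain ⟨rfl, -⟩ := List.cons_eq_cons.1 hσ'
        simp

theorem PhaseWord.map_some_append {T : Finset ℕ} {u : List (α × ℕ)} (hu : ∀ x ∈ u, x.2 ∈ T)
    {w : List (Option α × ℕ)} (h : PhaseWord T w) : PhaseWord T (u.map (Prod.map some id) ++ w) :=
  .act (fun _ hy => by obtain ⟨x, hx, rfl⟩ := List.mem_map.1 hy; exact ⟨⟨x.1, rfl⟩, hu x hx⟩) h

theorem PhaseWord.syncBullet {T : Finset ℕ} {w : List (Option α × ℕ)} (h : PhaseWord T w) :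
    SyncBullet w := by
  rcases T.eq_empty_or_nonempty with rfl | hT
  · obtain rfl : w = [] :=
      List.eq_nil_iff_forall_not_mem.2 fun x hx => by simpa using h.snd_mem x hx
    exact ⟨∅, SyncT.base⟩
  · exact ⟨T, by simpa using SyncT.step (Finset.empty_ssubset.2 hT) h SyncT.base⟩

end SyncPoints

section ExampleGraphs

variable {α : Type} (a b c : α)

theorem exG14_traces : (exG14 a b c).traces = {[a, b, c]} := by
  have hpath : [a, b, c] ∈ (exG14 a b c).traces :=
    .cons (Or.inl ⟨rfl, rfl, rfl⟩) (.cons (Or.inr (Or.inl ⟨rfl, rfl, rfl⟩))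
      (.cons (Or.inr (Or.inr ⟨rfl, rfl, rfl⟩)) (.nil _)))
  refine Set.eq_singleton_iff_unique_mem.2
    ⟨hpath, fun w hw => PathRel.eq_of_deterministic ?_ ?_ hw hpath⟩
  · simp only [exG14]
    rintro _ _ _ _ _ (⟨rfl, rfl, rfl⟩ | ⟨rfl, rfl, rfl⟩ | ⟨rfl, rfl, rfl⟩)
      (⟨h, rfl, rfl⟩ | ⟨h, rfl, rfl⟩ | ⟨h, rfl, rfl⟩) <;> simp_all
  · simp [exG14]

theorem exG14'_traces : (exG14' a b c).traces = {[some a, none, some b, none, some c]} := by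
  have hpath : [some a, none, some b, none, some c] ∈ (exG14' a b c).traces :=
    .cons (Or.inl ⟨rfl, rfl, rfl⟩) (.cons (Or.inr (Or.inl ⟨rfl, rfl, rfl⟩))
      (.cons (Or.inr (Or.inr (Or.inl ⟨rfl, rfl, rfl⟩)))
        (.cons (Or.inr (Or.inr (Or.inr (Or.inl ⟨rfl, rfl, rfl⟩))))
          (.cons (Or.inr (Or.inr (Or.inr (Or.inr ⟨rfl, rfl, rfl⟩)))) (.nil _)))))
  refine Set.eq_singleton_iff_unique_mem.2
    ⟨hpath, fun w hw => PathRel.eq_of_deterministic ?_ ?_ hw hpath⟩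
  · simp only [exG14']
    rintro _ _ _ _ _
      (⟨rfl, rfl, rfl⟩ | ⟨rfl, rfl, rfl⟩ | ⟨rfl, rfl, rfl⟩ | ⟨rfl, rfl, rfl⟩ | ⟨rfl, rfl, rfl⟩)
      (⟨h, rfl, rfl⟩ | ⟨h, rfl, rfl⟩ | ⟨h, rfl, rfl⟩ | ⟨h, rfl, rfl⟩ | ⟨h, rfl, rfl⟩) <;> simp_all
  · simp [exG14']

theorem exG14_alphabet : (exG14 a b c).alphabet = {a, b, c} := by
  ext x
  simp only [CFG.alphabet, exG14, Set.mem_insert_iff, Set.mem_singleton_iff]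
  constructor
  · rintro ⟨_, _, ⟨-, rfl, -⟩ | ⟨-, rfl, -⟩ | ⟨-, rfl, -⟩⟩ <;> simp
  · rintro (rfl | rfl | rfl)
    exacts [⟨0, 1, Or.inl ⟨rfl, rfl, rfl⟩⟩, ⟨1, 2, Or.inr (Or.inl ⟨rfl, rfl, rfl⟩)⟩,
      ⟨2, 3, Or.inr (Or.inr ⟨rfl, rfl, rfl⟩)⟩]

theorem syncInstr_exG14 : SyncInstr (exG14 a b c) (exG14' a b c) where
  proj_traces := by rw [exG14_traces, exG14'_traces, Set.image_singleton]; rfl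
  proj_inj τ₁ h₁ τ₂ h₂ _ := by
    rw [exG14'_traces, Set.mem_singleton_iff] at h₁ h₂
    rw [h₁, h₂]

theorem instrLang_exG14'_subset : instrLang (exG14' a b c) ⊆ progLang (exG14 a b c) := by
  rintro _ ⟨τ, rfl, -, hτ⟩ i
  rw [projThread_restrictSigma, exG14_traces]
  rcases hτ i with h | h
  · rw [exG14'_traces, Set.mem_singleton_iff] at h
    simp [h]
  · simp [h]

end ExampleGraphs

def sortABC {α : Type} [DecidableEq α] (a b : α) (τ : List (α × ℕ)) : List (α × ℕ) :=
  τ.filter (fun x => x.1 = a) ++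
    ((τ.filter (fun x => !decide (x.1 = a))).filter (fun x => x.1 = b) ++
      (τ.filter (fun x => !decide (x.1 = a))).filter (fun x => !decide (x.1 = b)))

section ExampleLanguages

variable {α : Type} {a b c : α}

theorem fst_eq_of_mem_progLang_exG14 {τ : List (α × ℕ)} (hτ : τ ∈ progLang (exG14 a b c))
    {x : α × ℕ} (hx : x ∈ τ) : x.1 = a ∨ x.1 = b ∨ x.1 = c := by
  have hmem := mem_projThread hx
  rcases hτ x.2 with h | h
  · rw [exG14_traces, Set.mem_singleton_iff] at h
    simpa [h] using hmem
  · simp [h] at hmem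

theorem pairwise_of_mem_progLang_exG14 (hab : a ≠ b) (hac : a ≠ c) (hbc : b ≠ c)
    {τ : List (α × ℕ)} (hτ : τ ∈ progLang (exG14 a b c)) :
    τ.Pairwise (fun x y => x.2 = y.2 → y.1 ≠ a ∧ x.1 ≠ c) := by
  refine pairwise_of_projThread (R := fun x y => y ≠ a ∧ x ≠ c) fun i => ?_
  rcases hτ i with h | h
  · rw [exG14_traces, Set.mem_singleton_iff] at h
    simp [h, hac, hbc, hab.symm, hac.symm]
  · simp [h]

theorem coveredBy_sortABC [DecidableEq α] (hab : a ≠ b) (hac : a ≠ c) (hbc : b ≠ c)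
    {I : Set (α × α)} (hba : (b, a) ∈ I) (hca : (c, a) ∈ I) (hcb : (c, b) ∈ I)
    {τ : List (α × ℕ)} (hτ : τ ∈ progLang (exG14 a b c)) :
    CoveredBy I τ (sortABC a b τ) := by
  have horder := pairwise_of_mem_progLang_exG14 hab hac hbc hτ
  have hfirst : CoveredBy I τ
      (τ.filter (fun x => x.1 = a) ++ τ.filter (fun x => !decide (x.1 = a))) := by
    refine coveredBy_filter_append _ (horder.imp_of_mem fun {x y} hx _ hxy hy hx' => ?_)
    simp only [decide_eq_true_eq] at hy hx'
    refine ⟨?_, fun h => (hxy h).1 hy⟩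
    rcases fst_eq_of_mem_progLang_exG14 hτ hx with h | h | h
    · exact absurd h hx'
    · rwa [h, hy]
    · rwa [h, hy]
  have hsecond : CoveredBy I (τ.filter (fun x => !decide (x.1 = a)))
      ((τ.filter (fun x => !decide (x.1 = a))).filter (fun x => x.1 = b) ++
        (τ.filter (fun x => !decide (x.1 = a))).filter (fun x => !decide (x.1 = b))) := by
    refine coveredBy_filter_append _
      ((horder.filter _).imp_of_mem fun {x y} hx _ hxy hy hx' => ?_)
    simp only [decide_eq_true_eq] at hy hx'
    obtain ⟨hxτ, hxa⟩ := List.mem_filter.1 hx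
    have hxc : x.1 = c := by
      rcases fst_eq_of_mem_progLang_exG14 hτ hxτ with h | h | h
      · simp [h] at hxa
      · exact absurd h hx'
      · exact h
    exact ⟨by rwa [hxc, hy], fun h => (hxy h).2 hxc⟩
  exact hfirst.trans (hsecond.append_left _)

theorem sortABC_mem_instrLang [DecidableEq α] (hab : a ≠ b) (hac : a ≠ c) (hbc : b ≠ c)
    {τ : List (α × ℕ)} (hτ : τ ∈ progLang (exG14 a b c)) :
    sortABC a b τ ∈ instrLang (exG14' a b c) := by
  unfold sortABC
  set A := τ.filter (fun x => x.1 = a)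
  set B := (τ.filter (fun x => !decide (x.1 = a))).filter (fun x => x.1 = b)
  set C := (τ.filter (fun x => !decide (x.1 = a))).filter (fun x => !decide (x.1 = b))
  set T := (τ.map Prod.snd).toFinset
  have hT : ∀ {u : List (α × ℕ)}, u.Sublist τ → ∀ x ∈ u, x.2 ∈ T :=
    fun hu x hx => List.mem_toFinset.2 (List.mem_map_of_mem (hu.subset hx))
  have hA : A.Sublist τ := List.filter_sublist
  have hB : B.Sublist τ := List.filter_sublist.trans List.filter_sublist
  have hC : C.Sublist τ := List.filter_sublist.trans List.filter_sublist
  refine ⟨A.map (Prod.map some id) ++ (bulletWord T ++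
    (B.map (Prod.map some id) ++ (bulletWord T ++ C.map (Prod.map some id)))), ?_, ?_, fun i => ?_⟩
  · simp [restrictSigma_append, restrictSigma_map_some, restrictSigma_bulletWord]
  · refine PhaseWord.syncBullet (.map_some_append (hT hA) (.bullet (.map_some_append (hT hB)
      (.bullet ?_))))
    simpa using PhaseWord.map_some_append (hT hC) PhaseWord.nil
  · simp only [projThread_append, projThread_map_fst, projThread_bulletWord, A, B, C,
      projThread_filter (fun y => decide (y = a)), projThread_filter (fun y => !decide (y = a)),
      projThread_filter (fun y => decide (y = b)), projThread_filter (fun y => !decide (y = b))]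
    rcases hτ i with h | h
    · have hiT : i ∈ T := by
        obtain ⟨x, hx, hxi⟩ : ∃ x ∈ τ, x.2 = i := by
          by_contra! hne
          rw [projThread_eq_nil_iff.2 hne, exG14_traces] at h
          simp at h
        exact List.mem_toFinset.2 (List.mem_map.2 ⟨x, hx, hxi⟩)
      rw [exG14_traces, Set.mem_singleton_iff] at h
      left
      simp [h, hiT, exG14'_traces, hab.symm, hac.symm, hbc.symm]
    · have hiT : i ∉ T := by
        simp only [T, List.mem_toFinset, List.mem_map]
        rintro ⟨x, hx, rfl⟩
        exact projThread_eq_nil_iff.1 h x hx rfl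
      right
      simp [h, hiT]

theorem mazReduction_exG14 (hab : a ≠ b) (hac : a ≠ c) (hbc : b ≠ c) {I : Set (α × α)}
    (hba : (b, a) ∈ I) (hca : (c, a) ∈ I) (hcb : (c, b) ∈ I) :
    MazReduction I (instrLang (exG14' a b c)) (progLang (exG14 a b c)) := by
  classical
  exact ⟨instrLang_exG14'_subset a b c, fun τ hτ =>
    ⟨_, sortABC_mem_instrLang hab hac hbc hτ, coveredBy_sortABC hab hac hbc hba hca hcb hτ⟩⟩

theorem bulletCount_of_append_cons_eq_exG14' (hab : a ≠ b) (hac : a ≠ c) (hbc : b ≠ c)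
    {P S : List (Option α)} {x : α} (h : P ++ some x :: S = [some a, none, some b, none, some c]) :
    (x = b → bulletCount P = 1) ∧ (x = c → bulletCount P = 2) := by
  rcases P with _ | ⟨p₁, _ | ⟨p₂, _ | ⟨p₃, _ | ⟨p₄, _ | ⟨p₅, P⟩⟩⟩⟩⟩ <;>
    simp_all [bulletCount, hbc.symm]

theorem not_mem_instrLang_of_c_before_b (hab : a ≠ b) (hac : a ≠ c) (hbc : b ≠ c)
    {u v : List (α × ℕ)} {i j : ℕ} (hτ : u ++ (c, i) :: v ∈ instrLang (exG14' a b c))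
    (hb : (b, j) ∈ v) : False := by
  obtain ⟨τ, hres, ⟨T, hsync⟩, hthreads⟩ := hτ
  obtain ⟨ρ, σ, rfl, rfl⟩ := exists_eq_append_cons_of_restrictSigma hres.symm
  have hbσ : (some b, j) ∈ σ := mem_restrictSigma.1 hb
  have hsame : bulletCount (projThread i ρ) = bulletCount (projThread j ρ) :=
    hsync.bulletCount_projThread_eq rfl hbσ
  have htrace : ∀ k, ∀ y ∈ ρ ++ (some c, i) :: σ, y.2 = k →
      projThread k (ρ ++ (some c, i) :: σ) = [some a, none, some b, none, some c] := by
    rintro k y hy rfl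
    rcases hthreads y.2 with h | h
    · rwa [exG14'_traces, Set.mem_singleton_iff] at h
    · exact absurd h (List.ne_nil_of_mem (mem_projThread hy))
  have hi : bulletCount (projThread i ρ) = 2 := by
    refine (bulletCount_of_append_cons_eq_exG14' hab hac hbc (S := projThread i σ) ?_).2 rfl
    rw [← htrace i (some c, i) (by simp) rfl, projThread_append, projThread_cons, if_pos rfl]
  obtain ⟨σ₁, σ₂, rfl⟩ := List.append_of_mem hbσ
  have hj : bulletCount (projThread j (ρ ++ (some c, i) :: σ₁)) = 1 := by
    refine (bulletCount_of_append_cons_eq_exG14' hab hac hbc (S := projThread j σ₂) ?_).1 rfl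
    rw [← htrace j (some b, j) (by simp) rfl, show ρ ++ (some c, i) :: (σ₁ ++ (some b, j) :: σ₂) =
        (ρ ++ (some c, i) :: σ₁) ++ (some b, j) :: σ₂ by simp,
      projThread_append _ (ρ ++ _), projThread_cons, if_pos rfl]
  simp only [projThread_append, bulletCount_append] at hj
  omega

theorem not_mazReduction_exG14 (hab : a ≠ b) (hac : a ≠ c) (hbc : b ≠ c) {I : Set (α × α)}
    (hbc' : (b, c) ∉ I) (hcb' : (c, b) ∉ I) :
    ¬ MazReduction I (instrLang (exG14' a b c)) (progLang (exG14 a b c)) := by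
  classical
  rintro ⟨-, hcov⟩
  have hτ₀ : [(a, 1), (b, 1), (c, 1), (a, 2), (b, 2), (c, 2)] ∈ progLang (exG14 a b c) := by
    intro k
    rw [exG14_traces, Set.mem_singleton_iff]
    rcases eq_or_ne k 1 with rfl | h1
    · simp [projThread_cons]
    rcases eq_or_ne k 2 with rfl | h2
    · simp [projThread_cons]
    · simp [projThread_cons, h1.symm, h2.symm]
  obtain ⟨τ, hτ, hcovτ⟩ := hcov _ hτ₀
  have hfilter : τ.filter (fun x => x = (c, 1) ∨ x = (b, 2)) = [(c, 1), (b, 2)] := by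
    rw [hcovτ.filter_eq]
    · simp [hab, hac, hbc, hbc.symm]
    · rintro x y i j hxy hij ⟨hx, hy⟩
      simp only [decide_eq_true_eq, Prod.mk.injEq] at hx hy
      rcases hx with ⟨rfl, rfl⟩ | ⟨rfl, rfl⟩ <;> rcases hy with ⟨rfl, rfl⟩ | ⟨rfl, rfl⟩
      exacts [hij rfl, hcb' hxy, hbc' hxy, hij rfl]
  obtain ⟨u, v, rfl, -, -, hv⟩ := List.filter_eq_cons_iff.1 hfilter
  exact not_mem_instrLang_of_c_before_b hab hac hbc hτ
    (List.mem_of_mem_filter (hv ▸ List.mem_singleton_self _))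

end ExampleLanguages

/-- Mover properties do not characterize sound sync-point
instrumentations. `G'` is a sync-point instrumentation of `G`; it is sound wrt.
`I = {a,b,c}² ∖ {(b,b),(c,c)}` but unsound wrt. `I' = {a,b,c}² ∖ {(b,c),(c,b)}`, although
every action has the same left/right mover status wrt. `I` and `I'`. -/
theorem stmt_14 {α : Type} (a b c : α) (hab : a ≠ b) (hac : a ≠ c) (hbc : b ≠ c)
    (I I' : Set (α × α))
    (hI : I = (({a, b, c} : Set α) ×ˢ ({a, b, c} : Set α)) \ {(b, b), (c, c)})
    (hI' : I' = (({a, b, c} : Set α) ×ˢ ({a, b, c} : Set α)) \ {(b, c), (c, b)}) :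
    SyncInstr (exG14 a b c) (exG14' a b c) ∧
      MazReduction I (instrLang (exG14' a b c)) (progLang (exG14 a b c)) ∧
      ¬ MazReduction I' (instrLang (exG14' a b c)) (progLang (exG14 a b c)) ∧
      ∀ x ∈ ({a, b, c} : Set α),
        (LeftMover (exG14 a b c) I x ↔ LeftMover (exG14 a b c) I' x) ∧
        (RightMover (exG14 a b c) I x ↔ RightMover (exG14 a b c) I' x) := by
  subst hI hI'
  refine ⟨syncInstr_exG14 a b c, mazReduction_exG14 hab hac hbc ?_ ?_ ?_,
    not_mazReduction_exG14 hab hac hbc ?_ ?_, ?_⟩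
  rotate_right
  · rintro x (rfl | rfl | rfl) <;>
      simp [LeftMover, RightMover, exG14_alphabet, hab, hac, hbc, hab.symm, hac.symm, hbc.symm]
  all_goals simp [hab, hac, hbc, hab.symm, hac.symm, hbc.symm]
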